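/- For finite multisets M, N of a poset P: N << M if and only if N ⪯ M and for every element p of M there exists an element q of N with q ≤ p. -/

import Mathlib

namespace Paper

/-- Multiset projectivity: `MProj r N M` (`N << M`) holds iff there is a surjective
multiset map `f : M ↠ N` with `r (f p) p` for every occurrence `p` of `M`;
equivalently, `M` splits into nonempty fibers indexed by the occurrences of `N`. -/
def MProj {α : Type*} (r : α → α → Prop) (N M : Multiset α) : Prop :=
  ∃ L : Multiset (α × Multiset α),
    L.map Prod.fst = N ∧ (L.map Prod.snd).sum = M ∧
    ∀ x ∈ L, x.2 ≠ 0 ∧ ∀ p ∈ x.2, r x.1 p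

/-- Multiset embeddability: `MEmbed r N M` (`N ⪯ M`) holds iff there is an injective
multiset map `g : N ↪ M` with `r q (g q)` for all `q ∈ N`; equivalently, `N` is
related pointwise to a sub-multiset of `M`. -/
def MEmbed {α : Type*} (r : α → α → Prop) (N M : Multiset α) : Prop :=
  ∃ M' ≤ M, Multiset.Rel r N M'


section

variable {α : Type*} {r : α → α → Prop} {N M : Multiset α}

/-- The new element `p` is added to the fiber of `q`. -/
theorem MProj.cons {p : α} (h : MProj r N M) (hp : ∃ q ∈ N, r q p) :
    MProj r N (p ::ₘ M) := by
  obtain ⟨L, rfl, rfl, hL⟩ := h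
  obtain ⟨q, hqN, hqp⟩ := hp
  obtain ⟨x, hxL, rfl⟩ := Multiset.mem_map.mp hqN
  obtain ⟨L', rfl⟩ := Multiset.exists_cons_of_mem hxL
  refine ⟨(x.1, p ::ₘ x.2) ::ₘ L', by simp, by simp, ?_⟩
  rintro y hy
  rcases Multiset.mem_cons.mp hy with rfl | hyL'
  · refine ⟨Multiset.cons_ne_zero, ?_⟩
    rintro p' hp'
    rcases Multiset.mem_cons.mp hp' with rfl | hp'x
    · exact hqp
    · exact (hL x hxL).2 p' hp'x
  · exact hL y (Multiset.mem_cons_of_mem hyL')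

theorem MProj.add_right {R : Multiset α} (h : MProj r N M) (hR : ∀ p ∈ R, ∃ q ∈ N, r q p) :
    MProj r N (M + R) := by
  induction R using Multiset.induction with
  | empty => simpa using h
  | cons p R ih =>
    rw [Multiset.add_cons]
    exact (ih fun p' hp' => hR p' (Multiset.mem_cons_of_mem hp')).cons
      (hR p (Multiset.mem_cons_self p R))

theorem MProj.of_rel (h : Multiset.Rel r N M) : MProj r N M := by
  induction h with
  | zero => exact ⟨0, by simp⟩
  | @cons a b _ _ hab _ ih =>
    obtain ⟨L, hfst, hsnd, hL⟩ := ih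
    refine ⟨(a, {b}) ::ₘ L, by simp [hfst], by simp [hsnd], ?_⟩
    rintro y hy
    rcases Multiset.mem_cons.mp hy with rfl | hyL
    · exact ⟨Multiset.singleton_ne_zero b, by simpa using hab⟩
    · exact hL y hyL

/-- Picking one element from each (nonempty) fiber gives the embedding. -/
theorem MProj.mEmbed (h : MProj r N M) : MEmbed r N M := by
  obtain ⟨L, rfl, rfl, hL⟩ := h
  induction L using Multiset.induction with
  | empty => exact ⟨0, le_rfl, by simp⟩
  | cons x L ih =>
    obtain ⟨M', hM'le, hrel⟩ := ih fun y hy => hL y (Multiset.mem_cons_of_mem hy)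
    obtain ⟨hne, hx⟩ := hL x (Multiset.mem_cons_self x L)
    obtain ⟨p, hp⟩ := Multiset.exists_mem_of_ne_zero hne
    refine ⟨p ::ₘ M', ?_, by simpa using Multiset.Rel.cons (hx p hp) hrel⟩
    simpa [← Multiset.singleton_add] using add_le_add (Multiset.singleton_le.mpr hp) hM'le

theorem MProj.exists_rel_of_mem (h : MProj r N M) {p : α} (hp : p ∈ M) : ∃ q ∈ N, r q p := by
  obtain ⟨L, rfl, rfl, hL⟩ := h
  obtain ⟨_, hm, hpm⟩ := Multiset.mem_join.mp hp
  obtain ⟨x, hxL, rfl⟩ := Multiset.mem_map.mp hm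
  exact ⟨x.1, Multiset.mem_map_of_mem _ hxL, (hL x hxL).2 p hpm⟩

/-- Split `M = M' + R` with `N` related to `M'`; `R` is then distributed over the fibers. -/
theorem mProj_iff_mEmbed_and_forall_exists_rel :
    MProj r N M ↔ MEmbed r N M ∧ ∀ p ∈ M, ∃ q ∈ N, r q p := by
  refine ⟨fun h => ⟨h.mEmbed, fun _ => h.exists_rel_of_mem⟩, ?_⟩
  rintro ⟨⟨M', hM'le, hrel⟩, hcover⟩
  obtain ⟨R, rfl⟩ := Multiset.le_iff_exists_add.mp hM'le
  exact (MProj.of_rel hrel).add_right fun p hp => hcover p (Multiset.mem_add.mpr (Or.inr hp))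

end

/-- `N << M` iff `N ⪯ M` and every element of `M` lies above some element of `N`. -/
theorem stmt_5 {P : Type*} [PartialOrder P] (N M : Multiset P) :
    MProj (· ≤ ·) N M ↔
      (MEmbed (· ≤ ·) N M ∧ ∀ p ∈ M, ∃ q ∈ N, q ≤ p) :=
  mProj_iff_mEmbed_and_forall_exists_rel

end Paper
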